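/- Let A = 𝔽₂[b_1, b_2, b_3, ...] be a polynomial algebra with one generator b_i in each positive degree i, and let Q be the 𝔽₂-linear derivation on A determined by Q(b_{2k}) = b_{2k+1-2^{n+1}} when 2k ≥ 2^{n+1}, Q(b_{2k}) = 0 when 2k < 2^{n+1}, and Q(b_{odd}) determined so that Q(b_{2i+1}) pairs with b_{2i+2^{n+1}} (i.e., Q(b_{2i+2^{n+1}}) = b_{2i+1} and Q(b_{2i+1}) = 0). Then the homology of A with respect to the differential Q (which satisfies Q² = 0) is the polynomial algebra 𝔽₂[b_2, b_4, ..., b_{2^{n+1}-2}] ⊗ 𝔽₂[b_{2i}² : i ≥ 2^n]. -/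

import Mathlib

/-!
Pair the generators as `e_j = b_{2^{n+1}+2j}` and `o_j = b_{2j+1}`: every odd generator and every
even generator of degree at least `2^{n+1}` lies in exactly one pair, and `Q = ∑ⱼ o_j ∂/∂e_j`.
On a single pair, `h(e^p o^q) = e^{p+1} o^{q-1}` for `p` even and `q ≥ 1` (and `h = 0` otherwise)
satisfies `Qh + hQ = 1 - π` over `𝔽₂`, with `π` the projection onto `𝔽₂[e²]`. Applying `h` at the
first pair on which a monomial is not a power of `e²` gives a homotopy `H` on all of `A` with
`QH + HQ + P = 1` and `PQ = 0`, where `P` projects onto the span of the monomials that are powers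
of `e_j²` on every pair. That span is the subalgebra generated by the unpaired `b_{2i}`
(`0 < i < 2^n`) and the `e_j²`, so `ker Q = im P ⊕ im Q`.
-/

open MvPolynomial

noncomputable section

/-- The polynomial algebra `A = 𝔽₂[b_1, b_2, b_3, ...]`. -/
abbrev A2 : Type := MvPolynomial {i : ℕ // 0 < i} (ZMod 2)

/-- The generator `b_i` (for `i ≥ 1`). -/
def bb (i : ℕ) : A2 := if h : 0 < i then X ⟨i, h⟩ else 0

namespace PairedDerivation

variable {σ R : Type*}

def moveOne (v w : σ) (a : σ →₀ ℕ) : σ →₀ ℕ :=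
  a - Finsupp.single v 1 + Finsupp.single w 1

section moveOne
variable {u v w : σ} {a : σ →₀ ℕ}

theorem moveOne_apply_of_ne (hv : u ≠ v) (hw : u ≠ w) : moveOne v w a u = a u := by
  simp [moveOne, hv.symm, hw.symm]

theorem moveOne_apply_left (hvw : v ≠ w) : moveOne v w a v = a v - 1 := by
  simp [moveOne, hvw]

theorem moveOne_apply_right (hvw : v ≠ w) : moveOne v w a w = a w + 1 := by
  simp [moveOne, hvw]

theorem moveOne_moveOne (hvw : v ≠ w) (ha : a v ≠ 0) : moveOne w v (moveOne v w a) = a := by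
  classical
  ext u
  simp only [moveOne, Finsupp.add_apply, Finsupp.tsub_apply, Finsupp.single_apply]
  split_ifs <;> subst_vars <;> omega

theorem moveOne_comm {v' w' : σ} (h₁ : v ≠ v') (h₂ : v ≠ w') (h₃ : w ≠ v')
    (h₄ : w ≠ w') : moveOne v w (moveOne v' w' a) = moveOne v' w' (moveOne v w a) := by
  classical
  ext u
  simp only [moveOne, Finsupp.add_apply, Finsupp.tsub_apply, Finsupp.single_apply]
  split_ifs <;> subst_vars <;> first | omega | contradiction

end moveOne

variable [CommRing R] {e o : ℕ → σ}

theorem derivation_monomial_eq_sum [CharP R 2] (he : Function.Injective e)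
    {D : Derivation R (MvPolynomial σ R) (MvPolynomial σ R)}
    (hDe : ∀ j, D (X (e j)) = X (o j)) (hD : ∀ v ∉ Set.range e, D (X v) = 0)
    (a : σ →₀ ℕ) (s : Finset ℕ) (hs : ∀ j, a (e j) ≠ 0 → j ∈ s) :
    D (monomial a 1) =
      ∑ j ∈ s, if Odd (a (e j)) then monomial (moveOne (e j) (o j) a) 1 else 0 := by
  set g : σ → MvPolynomial σ R := fun v =>
    monomial (a - Finsupp.single v 1) (a v : R) • D (X v)
  have hg : ∀ j, g (e j) = if Odd (a (e j)) then monomial (moveOne (e j) (o j) a) 1 else 0 := by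
    intro j
    dsimp only [g]
    rw [hDe, smul_eq_mul, X, monomial_mul, mul_one, ← moveOne, CharTwo.natCast_eq_ite]
    rcases Nat.even_or_odd (a (e j)) with h | h
    · rw [if_pos h, if_neg (Nat.not_odd_iff_even.mpr h), map_zero]
    · rw [if_neg (Nat.not_even_iff_odd.mpr h), if_pos h]
  have hmk : D = mkDerivation R fun v => D (X v) := derivation_ext fun v => by simp
  calc D (monomial a 1) = ∑ v ∈ a.support, g v := by
        rw [hmk, mkDerivation_monomial, one_smul, Finsupp.sum]
    _ = ∑ j ∈ a.support.preimage e he.injOn, g (e j) :=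
        (Finset.sum_preimage e _ _ g fun v _ hv => by simp [g, hD v hv]).symm
    _ = ∑ j ∈ s, g (e j) := Finset.sum_subset (fun j hj => hs j (by simpa using hj))
        fun j _ hj => by
          rw [Finset.mem_preimage, Finsupp.mem_support_iff, not_not] at hj
          simp [g, hj]
    _ = _ := Finset.sum_congr rfl fun j _ => hg j

variable (e o) in
def PairReduced (a : σ →₀ ℕ) (j : ℕ) : Prop := a (o j) = 0 ∧ Even (a (e j))

variable (e o) in
def IsReduced (a : σ →₀ ℕ) : Prop := ∀ j, PairReduced e o a j

variable (e o) in
def IsFirstUnreduced (a : σ →₀ ℕ) (k : ℕ) : Prop :=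
  ¬ PairReduced e o a k ∧ ∀ i < k, PairReduced e o a i

theorem IsReduced.add {a b : σ →₀ ℕ} (ha : IsReduced e o a) (hb : IsReduced e o b) :
    IsReduced e o (a + b) := fun j =>
  ⟨by simp [(ha j).1, (hb j).1], by simpa using (ha j).2.add (hb j).2⟩

section Pairs
variable {a : σ →₀ ℕ} {i j k : ℕ} (hp : Function.Injective (Sum.elim e o))
include hp

theorem e_ne_o (i j : ℕ) : e i ≠ o j := hp.ne Sum.inl_ne_inr

theorem e_ne_e (hij : i ≠ j) : e i ≠ e j := hp.ne (Sum.inl_injective.ne hij)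

theorem o_ne_o (hij : i ≠ j) : o i ≠ o j := hp.ne (Sum.inr_injective.ne hij)

theorem pairReduced_moveOne_iff (hij : i ≠ j) :
    PairReduced e o (moveOne (e j) (o j) a) i ↔ PairReduced e o a i := by
  rw [PairReduced, PairReduced,
    moveOne_apply_of_ne (e_ne_o hp j i).symm (o_ne_o hp hij),
    moveOne_apply_of_ne (e_ne_e hp hij) (e_ne_o hp i j)]

theorem not_pairReduced_moveOne : ¬ PairReduced e o (moveOne (e j) (o j) a) j := fun h =>
  Nat.succ_ne_zero _ ((moveOne_apply_right (e_ne_o hp j j)).symm.trans h.1)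

theorem IsFirstUnreduced.moveOne_of_le (hk : IsFirstUnreduced e o a k) (hkj : k ≤ j) :
    IsFirstUnreduced e o (moveOne (e j) (o j) a) k := by
  refine ⟨?_, fun i hi => (pairReduced_moveOne_iff hp (by omega)).mpr (hk.2 i hi)⟩
  rcases hkj.eq_or_lt with rfl | hkj
  · exact not_pairReduced_moveOne hp
  · exact (pairReduced_moveOne_iff hp hkj.ne).not.mpr hk.1

end Pairs

theorem IsFirstUnreduced.lt_of_odd {a : σ →₀ ℕ} {j k : ℕ} (hk : IsFirstUnreduced e o a k)
    (hjk : j ≠ k) (hj : Odd (a (e j))) : k < j := by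
  by_contra! hjk'
  exact Nat.not_even_iff_odd.mpr hj (hk.2 j (lt_of_le_of_ne hjk' hjk)).2

open Classical in
variable (R e o) in
def homotopyMonomial (a : σ →₀ ℕ) : MvPolynomial σ R :=
  if h : ∃ k, ¬ PairReduced e o a k then
    if Even (a (e (Nat.find h))) then monomial (moveOne (o (Nat.find h)) (e (Nat.find h)) a) 1
    else 0
  else 0

theorem homotopyMonomial_of_isReduced {a : σ →₀ ℕ} (ha : IsReduced e o a) :
    homotopyMonomial R e o a = 0 :=
  dif_neg fun ⟨k, hk⟩ => hk (ha k)

theorem IsFirstUnreduced.homotopyMonomial_eq {a : σ →₀ ℕ} {k : ℕ}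
    (hk : IsFirstUnreduced e o a k) : homotopyMonomial R e o a =
      if Even (a (e k)) then monomial (moveOne (o k) (e k) a) 1 else 0 := by
  classical
  have hex : ∃ k, ¬ PairReduced e o a k := ⟨k, hk.1⟩
  have hfind : Nat.find hex = k :=
    (Nat.find_eq_iff hex).mpr ⟨hk.1, fun i hi => not_not.mpr (hk.2 i hi)⟩
  rw [homotopyMonomial, dif_pos hex]
  simp only [hfind]

variable (R e o) in
def homotopy : MvPolynomial σ R →ₗ[R] MvPolynomial σ R :=
  (basisMonomials σ R).constr R (homotopyMonomial R e o)

open Classical in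
variable (R e o) in
def reducedProjection : MvPolynomial σ R →ₗ[R] MvPolynomial σ R :=
  (basisMonomials σ R).constr R fun a => if IsReduced e o a then monomial a 1 else 0

theorem monomial_eq_basisMonomials (a : σ →₀ ℕ) :
    (monomial a 1 : MvPolynomial σ R) = basisMonomials σ R a := by
  rw [coe_basisMonomials]

theorem homotopy_monomial (a : σ →₀ ℕ) :
    homotopy R e o (monomial a 1) = homotopyMonomial R e o a := by
  rw [monomial_eq_basisMonomials, homotopy, Module.Basis.constr_basis]

open Classical in
theorem reducedProjection_monomial (a : σ →₀ ℕ) :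
    reducedProjection R e o (monomial a 1) = if IsReduced e o a then monomial a 1 else 0 := by
  rw [monomial_eq_basisMonomials, reducedProjection, Module.Basis.constr_basis,
    ← monomial_eq_basisMonomials]

theorem exists_isFirstUnreduced {a : σ →₀ ℕ} (ha : ¬ IsReduced e o a) :
    ∃ k, IsFirstUnreduced e o a k := by
  classical
  have hex : ∃ k, ¬ PairReduced e o a k := not_forall.mp ha
  exact ⟨Nat.find hex, Nat.find_spec hex, fun i hi => not_not.mp (Nat.find_min hex hi)⟩

section Homotopy
variable [CharP R 2] {D : Derivation R (MvPolynomial σ R) (MvPolynomial σ R)}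
  (hp : Function.Injective (Sum.elim e o))
  (hDe : ∀ j, D (X (e j)) = X (o j)) (hD : ∀ v ∉ Set.range e, D (X v) = 0)
include hp hDe hD

theorem derivation_monomial_eq_sum_preimage (a : σ →₀ ℕ) :
    D (monomial a 1) = ∑ j ∈ a.support.preimage e (hp.comp Sum.inl_injective).injOn,
      if Odd (a (e j)) then monomial (moveOne (e j) (o j) a) 1 else 0 :=
  derivation_monomial_eq_sum (hp.comp Sum.inl_injective) hDe hD a _ fun _ hj =>
    Finset.mem_preimage.mpr (Finsupp.mem_support_iff.mpr hj)

theorem derivation_monomial_of_isReduced {a : σ →₀ ℕ} (ha : IsReduced e o a) :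
    D (monomial a 1) = 0 := by
  rw [derivation_monomial_eq_sum_preimage hp hDe hD]
  exact Finset.sum_eq_zero fun j _ => if_neg (Nat.not_odd_iff_even.mpr (ha j).2)

theorem reducedProjection_derivation_monomial (a : σ →₀ ℕ) :
    reducedProjection R e o (D (monomial a 1)) = 0 := by
  classical
  rw [derivation_monomial_eq_sum_preimage hp hDe hD, map_sum]
  refine Finset.sum_eq_zero fun j _ => ?_
  split_ifs
  · rw [reducedProjection_monomial, if_neg fun h => not_pairReduced_moveOne hp (h j)]
  · exact map_zero _

theorem homotopy_derivation_monomial_of_odd {a : σ →₀ ℕ} {k : ℕ}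
    (hk : IsFirstUnreduced e o a k) (hodd : Odd (a (e k))) :
    homotopy R e o (D (monomial a 1)) = monomial a 1 := by
  rw [derivation_monomial_eq_sum_preimage hp hDe hD, map_sum, Finset.sum_eq_single k]
  · rw [if_pos hodd, homotopy_monomial, (hk.moveOne_of_le hp le_rfl).homotopyMonomial_eq,
      moveOne_apply_left (e_ne_o hp k k), if_pos (Nat.Odd.sub_odd hodd odd_one),
      moveOne_moveOne (e_ne_o hp k k) hodd.pos.ne']
  · intro j _ hjk
    split_ifs with hj
    · have hkj := hk.lt_of_odd hjk hj
      rw [homotopy_monomial, (hk.moveOne_of_le hp hkj.le).homotopyMonomial_eq,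
        moveOne_apply_of_ne (e_ne_e hp hkj.ne) (e_ne_o hp k j),
        if_neg (Nat.not_even_iff_odd.mpr hodd)]
    · exact map_zero _
  · exact fun hk' =>
      (hk' (Finset.mem_preimage.mpr (Finsupp.mem_support_iff.mpr hodd.pos.ne'))).elim

theorem derivation_homotopy_add_homotopy_derivation_of_even {a : σ →₀ ℕ} {k : ℕ}
    (hk : IsFirstUnreduced e o a k) (heven : Even (a (e k))) :
    D (homotopy R e o (monomial a 1)) + homotopy R e o (D (monomial a 1)) = monomial a 1 := by
  have he : Function.Injective e := hp.comp Sum.inl_injective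
  have hok : a (o k) ≠ 0 := fun h => hk.1 ⟨h, heven⟩
  have hbe : ∀ j ≠ k, moveOne (o k) (e k) a (e j) = a (e j) := fun j hjk =>
    moveOne_apply_of_ne (e_ne_o hp j k) (e_ne_e hp hjk)
  let s := insert k (a.support.preimage e he.injOn)
  have hs : ∀ j, a (e j) ≠ 0 → j ∈ s := fun j hj =>
    Finset.mem_insert_of_mem (Finset.mem_preimage.mpr (Finsupp.mem_support_iff.mpr hj))
  have hsb : ∀ j, moveOne (o k) (e k) a (e j) ≠ 0 → j ∈ s := fun j hj => by
    by_cases hjk : j = k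
    · exact hjk ▸ Finset.mem_insert_self _ _
    · exact hs j (hbe j hjk ▸ hj)
  let T : ℕ → MvPolynomial σ R := fun j =>
    if Odd (a (e j)) then monomial (moveOne (o k) (e k) (moveOne (e j) (o j) a)) 1 else 0
  have hDb : D (monomial (moveOne (o k) (e k) a) 1) = monomial a 1 + ∑ j ∈ s.erase k, T j := by
    rw [derivation_monomial_eq_sum he hDe hD _ s hsb,
      ← Finset.add_sum_erase s _ (Finset.mem_insert_self k _)]
    congr 1
    · rw [moveOne_apply_right (e_ne_o hp k k).symm, if_pos heven.add_one,
        moveOne_moveOne (e_ne_o hp k k).symm hok]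
    · refine Finset.sum_congr rfl fun j hj => ?_
      have hjk := Finset.ne_of_mem_erase hj
      rw [hbe j hjk, moveOne_comm (e_ne_o hp j k) (e_ne_e hp hjk) (o_ne_o hp hjk)
        (e_ne_o hp k j).symm]
  have hHD : homotopy R e o (D (monomial a 1)) = ∑ j ∈ s.erase k, T j := by
    rw [derivation_monomial_eq_sum he hDe hD a s hs, map_sum,
      ← Finset.add_sum_erase s _ (Finset.mem_insert_self k _),
      if_neg (Nat.not_odd_iff_even.mpr heven), map_zero, zero_add]
    refine Finset.sum_congr rfl fun j hj => ?_
    have hjk := Finset.ne_of_mem_erase hj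
    dsimp only [T]
    split_ifs with hj
    · have hkj := hk.lt_of_odd hjk hj
      rw [homotopy_monomial, (hk.moveOne_of_le hp hkj.le).homotopyMonomial_eq,
        moveOne_apply_of_ne (e_ne_e hp hkj.ne) (e_ne_o hp k j), if_pos heven]
    · exact map_zero _
  rw [homotopy_monomial, hk.homotopyMonomial_eq, if_pos heven, hDb, hHD, add_assoc,
    CharTwo.add_self_eq_zero, add_zero]

theorem derivation_comp_homotopy_add_homotopy_comp_derivation_add_reducedProjection :
    (D : MvPolynomial σ R →ₗ[R] MvPolynomial σ R) ∘ₗ homotopy R e o +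
      homotopy R e o ∘ₗ (D : MvPolynomial σ R →ₗ[R] MvPolynomial σ R) +
      reducedProjection R e o = LinearMap.id := by
  classical
  refine (basisMonomials σ R).ext fun a => ?_
  simp only [← monomial_eq_basisMonomials, LinearMap.add_apply, LinearMap.comp_apply,
    Derivation.coeFn_coe, LinearMap.id_apply, reducedProjection_monomial]
  by_cases ha : IsReduced e o a
  · rw [if_pos ha, homotopy_monomial, homotopyMonomial_of_isReduced ha, map_zero,
      derivation_monomial_of_isReduced hp hDe hD ha, map_zero, zero_add, zero_add]
  obtain ⟨k, hk⟩ := exists_isFirstUnreduced ha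
  rw [if_neg ha, add_zero]
  rcases Nat.even_or_odd (a (e k)) with h | h
  · exact derivation_homotopy_add_homotopy_derivation_of_even hp hDe hD hk h
  · rw [homotopy_monomial, hk.homotopyMonomial_eq, if_neg (Nat.not_even_iff_odd.mpr h),
      map_zero, zero_add, homotopy_derivation_monomial_of_odd hp hDe hD hk h]

theorem reducedProjection_comp_derivation :
    reducedProjection R e o ∘ₗ (D : MvPolynomial σ R →ₗ[R] MvPolynomial σ R) = 0 :=
  (basisMonomials σ R).ext fun a => by
    simpa [← monomial_eq_basisMonomials] using
      reducedProjection_derivation_monomial hp hDe hD a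

end Homotopy

variable (R e o) in
def homologyGenerators : Set (MvPolynomial σ R) :=
  X '' (Set.range e ∪ Set.range o)ᶜ ∪ Set.range fun j => X (e j) ^ 2

variable (R e o) in
def reducedSubalgebra : Subalgebra R (MvPolynomial σ R) :=
  (restrictSupport R {a | IsReduced e o a}).toSubalgebra
    ((monomial_mem_restrictSupport R).mpr (Or.inl fun _ => ⟨rfl, Even.zero⟩))
    fun _ _ hx hy =>
      restrictSupport_mono R (Set.add_subset_iff.mpr fun _ ha _ hb => IsReduced.add ha hb)
        ((restrictSupport_add R _ _).ge (Submodule.mul_mem_mul hx hy))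

theorem homologyGenerators_subset_reducedSubalgebra (hp : Function.Injective (Sum.elim e o)) :
    homologyGenerators R e o ⊆ reducedSubalgebra R e o := by
  classical
  rintro _ (⟨u, hu, rfl⟩ | ⟨j, rfl⟩)
  · refine (monomial_mem_restrictSupport R (r := (1 : R))).mpr (Or.inl fun i => ?_)
    simp only [Set.mem_compl_iff, Set.mem_union, Set.mem_range, not_or, not_exists] at hu
    simp [PairReduced, hu.1 i, hu.2 i]
  · show X (e j) ^ 2 ∈ reducedSubalgebra R e o
    rw [X_pow_eq_monomial]
    refine (monomial_mem_restrictSupport R (r := (1 : R))).mpr (Or.inl fun i => ?_)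
    simp only [PairReduced, Finsupp.single_apply, if_neg (e_ne_o hp j i)]
    exact ⟨trivial, by split_ifs <;> simp⟩

theorem monomial_mem_adjoin_homologyGenerators {a : σ →₀ ℕ} (ha : IsReduced e o a) :
    monomial a 1 ∈ Algebra.adjoin R (homologyGenerators R e o) := by
  rw [← prod_X_pow_eq_monomial]
  refine Subalgebra.prod_mem _ fun v _ => ?_
  by_cases hve : v ∈ Set.range e
  · obtain ⟨j, rfl⟩ := hve
    obtain ⟨m, hm⟩ := (ha j).2
    rw [hm, ← two_mul, pow_mul]
    exact pow_mem (Algebra.subset_adjoin (Set.mem_union_right _ (Set.mem_range_self j))) m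
  by_cases hvo : v ∈ Set.range o
  · obtain ⟨j, rfl⟩ := hvo
    rw [(ha j).1, pow_zero]
    exact one_mem _
  · refine pow_mem (Algebra.subset_adjoin (Set.mem_union_left _ (Set.mem_image_of_mem X ?_))) _
    exact fun h => h.elim hve hvo

variable (R) in
theorem toSubmodule_adjoin_homologyGenerators (hp : Function.Injective (Sum.elim e o)) :
    Subalgebra.toSubmodule (Algebra.adjoin R (homologyGenerators R e o)) =
      restrictSupport R {a | IsReduced e o a} := by
  refine le_antisymm (fun x hx => Algebra.adjoin_le
    (homologyGenerators_subset_reducedSubalgebra hp) hx) ?_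
  rw [restrictSupport_eq_span, Submodule.span_le]
  rintro _ ⟨a, ha, rfl⟩
  exact monomial_mem_adjoin_homologyGenerators ha

theorem reducedProjection_mem_restrictSupport (x : MvPolynomial σ R) :
    reducedProjection R e o x ∈ restrictSupport R {a | IsReduced e o a} := by
  classical
  suffices LinearMap.range (reducedProjection R e o) ≤
      restrictSupport R {a | IsReduced e o a} from this (LinearMap.mem_range_self _ x)
  rw [reducedProjection, Module.Basis.constr_range, Submodule.span_le]
  rintro _ ⟨a, rfl⟩
  dsimp only
  split_ifs with ha
  · exact (monomial_mem_restrictSupport R).mpr (Or.inl ha)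
  · exact zero_mem _

theorem reducedProjection_eq_self {x : MvPolynomial σ R}
    (hx : x ∈ restrictSupport R {a | IsReduced e o a}) : reducedProjection R e o x = x := by
  classical
  suffices restrictSupport R {a | IsReduced e o a} ≤
      LinearMap.eqLocus (reducedProjection R e o) LinearMap.id from this hx
  rw [restrictSupport_eq_span, Submodule.span_le]
  rintro _ ⟨a, ha, rfl⟩
  exact (reducedProjection_monomial a).trans (if_pos ha)

theorem algebraicIndependent_X_pow {ι : Type*} {w : ι → σ} (hw : Function.Injective w)
    {c : ι → ℕ} (hc : ∀ i, c i ≠ 0) :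
    AlgebraicIndependent R fun i => (X (w i) ^ c i : MvPolynomial σ R) := by
  let T : (ι →₀ ℕ) →+ (σ →₀ ℕ) :=
    Finsupp.liftAddHom fun i => (Finsupp.singleAddHom (w i)).comp (AddMonoidHom.mulLeft (c i))
  have hT : ∀ a i, T a (w i) = c i * a i := fun a i => by
    rw [Finsupp.liftAddHom_apply, Finsupp.sum_apply, Finsupp.sum_eq_single i]
    · simp
    · intro j _ hji
      simp [hw.ne hji]
    · simp
  have hTinj : Function.Injective T := fun a b hab => Finsupp.ext fun i =>
    Nat.eq_of_mul_eq_mul_left (Nat.pos_of_ne_zero (hc i)) (by rw [← hT, ← hT, hab])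
  have : aeval (fun i => (X (w i) ^ c i : MvPolynomial σ R)) =
      (AddMonoidAlgebra.mapDomainAlgHom R R T : MvPolynomial ι R →ₐ[R] MvPolynomial σ R) := by
    refine MvPolynomial.algHom_ext fun i => ?_
    rw [aeval_X, X_pow_eq_monomial]
    change _ = AddMonoidAlgebra.mapDomain T (AddMonoidAlgebra.single (Finsupp.single i 1) 1)
    rw [AddMonoidAlgebra.mapDomain_single]
    simp only [T, Finsupp.liftAddHom_apply_single, AddMonoidHom.coe_comp, Function.comp_apply,
      AddMonoidHom.coe_mulLeft, mul_one, Finsupp.singleAddHom_apply]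
    rfl
  rw [algebraicIndependent_iff_injective_aeval, this]
  exact AddMonoidAlgebra.mapDomain_injective hTinj

theorem algebraicIndependent_homologyGenerators (he : Function.Injective e) :
    AlgebraicIndependent R ((↑) : homologyGenerators R e o → MvPolynomial σ R) := by
  let U : Set σ := (Set.range e ∪ Set.range o)ᶜ
  let w : U ⊕ ℕ → σ := Sum.elim (↑) e
  let c : U ⊕ ℕ → ℕ := Sum.elim (fun _ => 1) fun _ => 2
  have hw : Function.Injective w :=
    Subtype.val_injective.sumElim he fun u j h => u.2 (Or.inl ⟨j, h.symm⟩)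
  have hrange :
      homologyGenerators R e o = Set.range fun i => (X (w i) ^ c i : MvPolynomial σ R) := by
    have : (fun i => (X (w i) ^ c i : MvPolynomial σ R)) =
        Sum.elim (fun u : U => X (u : σ)) fun j => X (e j) ^ 2 := by
      funext i; cases i <;> simp [w, c]
    rw [this, Set.Sum.elim_range, homologyGenerators, Set.image_eq_range]
  rw [hrange]
  exact (algebraicIndependent_X_pow hw fun i => by cases i <;> simp [c]).to_subtype_range

section Homology
variable [CharP R 2] {D : Derivation R (MvPolynomial σ R) (MvPolynomial σ R)}

theorem derivation_eq_zero_of_mem_adjoin_homologyGenerators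
    (hD : ∀ v ∉ Set.range e, D (X v) = 0) {x : MvPolynomial σ R}
    (hx : x ∈ Algebra.adjoin R (homologyGenerators R e o)) : D x = 0 := by
  induction hx using Algebra.adjoin_induction with
  | mem x hx =>
    rcases hx with ⟨v, hv, rfl⟩ | ⟨j, rfl⟩
    · exact hD v fun h => hv (Or.inl h)
    · show D (X (e j) ^ 2) = 0
      rw [sq, D.leibniz, smul_eq_mul, CharTwo.add_self_eq_zero]
  | algebraMap r => exact D.map_algebraMap r
  | add x y _ _ hx hy => rw [map_add, hx, hy, add_zero]
  | mul x y _ _ hx hy => rw [D.leibniz, hx, hy, smul_zero, smul_zero, add_zero]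

variable (hp : Function.Injective (Sum.elim e o))
  (hDe : ∀ j, D (X (e j)) = X (o j)) (hD : ∀ v ∉ Set.range e, D (X v) = 0)
include hp hDe hD

theorem toSubmodule_adjoin_homologyGenerators_inf_range_eq_bot :
    Subalgebra.toSubmodule (Algebra.adjoin R (homologyGenerators R e o)) ⊓
      LinearMap.range (D : MvPolynomial σ R →ₗ[R] MvPolynomial σ R) = ⊥ := by
  refine eq_bot_iff.mpr ?_
  rintro _ ⟨hx, y, rfl⟩
  rw [toSubmodule_adjoin_homologyGenerators R hp] at hx
  rw [Submodule.mem_bot, ← reducedProjection_eq_self hx]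
  exact LinearMap.congr_fun (reducedProjection_comp_derivation hp hDe hD) y

theorem ker_le_toSubmodule_adjoin_homologyGenerators_sup_range :
    LinearMap.ker (D : MvPolynomial σ R →ₗ[R] MvPolynomial σ R) ≤
      Subalgebra.toSubmodule (Algebra.adjoin R (homologyGenerators R e o)) ⊔
        LinearMap.range (D : MvPolynomial σ R →ₗ[R] MvPolynomial σ R) := by
  intro x hx
  have hid := LinearMap.congr_fun
    (derivation_comp_homotopy_add_homotopy_comp_derivation_add_reducedProjection hp hDe hD) x
  rw [LinearMap.mem_ker] at hx
  simp only [LinearMap.add_apply, LinearMap.comp_apply, hx, map_zero, add_zero,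
    LinearMap.id_apply] at hid
  rw [← hid, add_comm, toSubmodule_adjoin_homologyGenerators R hp]
  exact Submodule.add_mem_sup (reducedProjection_mem_restrictSupport x)
    (LinearMap.mem_range_self _ _)

end Homology

end PairedDerivation

open PairedDerivation

def pairEven (n j : ℕ) : {i : ℕ // 0 < i} := ⟨2 ^ (n + 1) + 2 * j, by positivity⟩

def pairOdd (j : ℕ) : {i : ℕ // 0 < i} := ⟨2 * j + 1, by omega⟩

theorem bb_coe (v : {i : ℕ // 0 < i}) : bb v = X v := dif_pos v.2

theorem injective_sumElim_pairEven_pairOdd (n : ℕ) :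
    Function.Injective (Sum.elim (pairEven n) pairOdd) := by
  obtain ⟨N, hN⟩ : ∃ N, 2 ^ (n + 1) = 2 * N := ⟨2 ^ n, pow_succ' 2 n⟩
  rintro (i | i) (j | j) h <;> simp [pairEven, pairOdd, Subtype.ext_iff, hN] at h ⊢ <;> omega

theorem mem_range_pairEven_iff {n : ℕ} {v : {i : ℕ // 0 < i}} :
    v ∈ Set.range (pairEven n) ↔ 2 ^ (n + 1) ≤ (v : ℕ) ∧ Even (v : ℕ) := by
  obtain ⟨N, hN⟩ : ∃ N, 2 ^ (n + 1) = 2 * N := ⟨2 ^ n, pow_succ' 2 n⟩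
  simp only [Set.mem_range, pairEven, Subtype.ext_iff, hN, Nat.even_iff]
  constructor
  · rintro ⟨j, hj⟩; omega
  · intro h; exact ⟨(v - 2 * N) / 2, by omega⟩

theorem mem_range_pairOdd_iff {v : {i : ℕ // 0 < i}} :
    v ∈ Set.range pairOdd ↔ Odd (v : ℕ) := by
  simp only [Set.mem_range, pairOdd, Subtype.ext_iff, Nat.odd_iff]
  constructor
  · rintro ⟨j, hj⟩; omega
  · intro h; exact ⟨(v - 1) / 2, by omega⟩

theorem bb_two_mul_two_pow_add (n j : ℕ) : bb (2 * (2 ^ n + j)) = X (pairEven n j) := by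
  rw [← bb_coe]
  congr 1
  simp only [pairEven, pow_succ]
  ring

theorem generators_eq_homologyGenerators (n : ℕ) :
    ((fun i => bb (2 * i)) '' {i | 0 < i ∧ i < 2 ^ n} ∪
      (fun i => bb (2 * i) ^ 2) '' {i | 2 ^ n ≤ i} : Set A2) =
      homologyGenerators (ZMod 2) (pairEven n) pairOdd := by
  have hpow : 2 ^ (n + 1) = 2 * 2 ^ n := pow_succ' 2 n
  have hU : ∀ v : {i : ℕ // 0 < i}, v ∈ (Set.range (pairEven n) ∪ Set.range pairOdd)ᶜ ↔
      ∃ i, (0 < i ∧ i < 2 ^ n) ∧ 2 * i = (v : ℕ) := fun v => by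
    have := v.2
    simp only [Set.mem_compl_iff, Set.mem_union, mem_range_pairEven_iff, mem_range_pairOdd_iff,
      Nat.even_iff, Nat.odd_iff, hpow]
    constructor
    · intro h; exact ⟨(v : ℕ) / 2, by omega⟩
    · rintro ⟨i, hi, hv⟩; omega
  rw [homologyGenerators]
  congr 1
  · ext x
    constructor
    · rintro ⟨i, ⟨hi0, hin⟩, rfl⟩
      exact ⟨⟨2 * i, by omega⟩, (hU _).mpr ⟨i, ⟨hi0, hin⟩, rfl⟩,
        (bb_coe ⟨2 * i, by omega⟩).symm⟩
    · rintro ⟨v, hv, rfl⟩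
      obtain ⟨i, hi, hv⟩ := (hU v).mp hv
      exact ⟨i, hi, by dsimp only; rw [hv, bb_coe]⟩
  · ext x
    constructor
    · rintro ⟨i, hi, rfl⟩
      refine ⟨i - 2 ^ n, ?_⟩
      dsimp only
      rw [← bb_two_mul_two_pow_add, Nat.add_sub_cancel' hi]
    · rintro ⟨j, rfl⟩
      exact ⟨2 ^ n + j, Nat.le_add_right _ _, by dsimp only; rw [bb_two_mul_two_pow_add]⟩

theorem stmt2_general (n : ℕ) (Q : A2 →ₗ[ZMod 2] A2)
    (hder : ∀ x y : A2, Q (x * y) = Q x * y + x * Q y)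
    (heven : ∀ k : ℕ, 0 < k →
      Q (bb (2 * k)) =
        if 2 ^ (n + 1) ≤ 2 * k then bb (2 * k + 1 - 2 ^ (n + 1)) else 0)
    (hodd : ∀ k : ℕ, Q (bb (2 * k + 1)) = 0) :
    AlgebraicIndependent (ZMod 2)
      ((↑) : ((fun i => bb (2 * i)) '' {i | 0 < i ∧ i < 2 ^ n} ∪
              (fun i => bb (2 * i) ^ 2) '' {i | 2 ^ n ≤ i} : Set A2) → A2) ∧
    (∀ x ∈ Algebra.adjoin (ZMod 2)
        ((fun i => bb (2 * i)) '' {i | 0 < i ∧ i < 2 ^ n} ∪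
         (fun i => bb (2 * i) ^ 2) '' {i | 2 ^ n ≤ i}), Q x = 0) ∧
    Subalgebra.toSubmodule (Algebra.adjoin (ZMod 2)
        ((fun i => bb (2 * i)) '' {i | 0 < i ∧ i < 2 ^ n} ∪
         (fun i => bb (2 * i) ^ 2) '' {i | 2 ^ n ≤ i})) ⊓ LinearMap.range Q = ⊥ ∧
    LinearMap.ker Q ≤
      Subalgebra.toSubmodule (Algebra.adjoin (ZMod 2)
        ((fun i => bb (2 * i)) '' {i | 0 < i ∧ i < 2 ^ n} ∪
         (fun i => bb (2 * i) ^ 2) '' {i | 2 ^ n ≤ i})) ⊔ LinearMap.range Q := by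
  let D : Derivation (ZMod 2) A2 A2 := Derivation.mk' Q fun x y => by
    rw [hder, smul_eq_mul, smul_eq_mul, mul_comm (Q x), add_comm]
  have hpow : 2 ^ (n + 1) = 2 * 2 ^ n := pow_succ' 2 n
  have hp := injective_sumElim_pairEven_pairOdd n
  have hDe : ∀ j, D (X (pairEven n j)) = X (pairOdd j) := fun j => by
    rw [← bb_two_mul_two_pow_add, Derivation.coe_mk', heven _ (by positivity), if_pos (by omega),
      ← bb_coe]
    congr 1
    simp only [pairOdd]
    omega
  have hD : ∀ v ∉ Set.range (pairEven n), D (X v) = 0 := by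
    rintro ⟨m, hm⟩ hv
    rw [Derivation.coe_mk', ← bb_coe]
    obtain ⟨k, rfl | rfl⟩ := Nat.even_or_odd' m
    · rw [heven k (by omega), if_neg]
      exact fun hk => hv (mem_range_pairEven_iff.mpr ⟨hk, even_two_mul k⟩)
    · exact hodd k
  rw [generators_eq_homologyGenerators n]
  exact ⟨algebraicIndependent_homologyGenerators (hp.comp Sum.inl_injective),
    fun x hx => derivation_eq_zero_of_mem_adjoin_homologyGenerators (D := D) hD hx,
    toSubmodule_adjoin_homologyGenerators_inf_range_eq_bot hp hDe hD,
    ker_le_toSubmodule_adjoin_homologyGenerators_sup_range hp hDe hD⟩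

/-- Let `Q` be the 𝔽₂-linear derivation on `A = 𝔽₂[b_1,b_2,...]` with
`Q(b_{2k}) = b_{2k+1-2^{n+1}}` when `2k ≥ 2^{n+1}`, `Q(b_{2k}) = 0` when `2k < 2^{n+1}`,
and `Q(b_odd) = 0`; then `Q² = 0` and the `Q`-homology of `A` is the polynomial algebra
`𝔽₂[b_2, b_4, ..., b_{2^{n+1}-2}] ⊗ 𝔽₂[b_{2i}² : i ≥ 2^n]`, i.e. the subalgebra
generated by `S = {b_{2i} : 0 < i < 2^n} ∪ {b_{2i}² : i ≥ 2^n}` maps isomorphically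
onto `ker Q / im Q`, and `S` is algebraically independent. -/
theorem stmt2 (n : ℕ) (hn : 1 ≤ n) (Q : A2 →ₗ[ZMod 2] A2)
    (hder : ∀ x y : A2, Q (x * y) = Q x * y + x * Q y)
    (hQ2 : ∀ x, Q (Q x) = 0)
    (heven : ∀ k : ℕ, 0 < k →
      Q (bb (2 * k)) =
        if 2 ^ (n + 1) ≤ 2 * k then bb (2 * k + 1 - 2 ^ (n + 1)) else 0)
    (hodd : ∀ k : ℕ, Q (bb (2 * k + 1)) = 0) :
    AlgebraicIndependent (ZMod 2)
      ((↑) : ((fun i => bb (2 * i)) '' {i | 0 < i ∧ i < 2 ^ n} ∪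
              (fun i => bb (2 * i) ^ 2) '' {i | 2 ^ n ≤ i} : Set A2) → A2) ∧
    (∀ x ∈ Algebra.adjoin (ZMod 2)
        ((fun i => bb (2 * i)) '' {i | 0 < i ∧ i < 2 ^ n} ∪
         (fun i => bb (2 * i) ^ 2) '' {i | 2 ^ n ≤ i}), Q x = 0) ∧
    Subalgebra.toSubmodule (Algebra.adjoin (ZMod 2)
        ((fun i => bb (2 * i)) '' {i | 0 < i ∧ i < 2 ^ n} ∪
         (fun i => bb (2 * i) ^ 2) '' {i | 2 ^ n ≤ i})) ⊓ LinearMap.range Q = ⊥ ∧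
    LinearMap.ker Q ≤
      Subalgebra.toSubmodule (Algebra.adjoin (ZMod 2)
        ((fun i => bb (2 * i)) '' {i | 0 < i ∧ i < 2 ^ n} ∪
         (fun i => bb (2 * i) ^ 2) '' {i | 2 ^ n ≤ i})) ⊔ LinearMap.range Q :=
  stmt2_general n Q hder heven hodd

end
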